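/- Let m be a nonnegative integer and i_1, …, i_m ∈ {1, …, 2n}. Then there exists a polynomial Q ∈ ℚ(q)[y_1,…,y_{2n(2n+1)}] of total degree at most m, depending only on n, m and i_1,…,i_m, such that for all choices of nonnegative integers α_{i,j} (1 ≤ i ≠ j ≤ 2n), β_i, γ_i (1 ≤ i ≤ 2n), the evaluation of D_{i_1} ∘ ⋯ ∘ D_{i_m}(P(α|β|γ)) at z_1 = … = z_{2n} = 1 equals Q evaluated at the tuple ((α_{i,j}), (β_i), (γ_i)). -/

import Mathlib

attribute [local instance] Classical.propDecidable

open MvPolynomial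

/-! ### Noncrossing matchings -/

/-- `f` encodes a noncrossing perfect matching of the points `0, …, 2n-1`
(point `p` of the paper, which is 1-indexed, corresponds to index `p-1`):
`f` is a fixed-point-free involution and no two arches cross. -/
def IsNCMatching (n : ℕ) (f : Fin (2*n) → Fin (2*n)) : Prop :=
  (∀ i, f (f i) = i) ∧ (∀ i, f i ≠ i) ∧
    ∀ i j : Fin (2*n), i < j → j < f i → f i < f j → False

/-- The type of noncrossing matchings of size `n`. -/
def NCM (n : ℕ) := {f : Fin (2*n) → Fin (2*n) // IsNCMatching n f}

noncomputable instance (n : ℕ) : Fintype (NCM n) := by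
  unfold NCM; exact Fintype.ofFinite _

/-- The noncrossing matching `()_n` consisting of `n` nested arches. -/
def nestedNC (n : ℕ) : NCM n :=
  ⟨fun i => ⟨2*n - 1 - i.val, by have := i.isLt; omega⟩, by
    refine ⟨fun i => ?_, fun i => ?_, fun i j h1 h2 h3 => ?_⟩
    · have := i.isLt
      apply Fin.ext
      show 2*n - 1 - (2*n - 1 - i.val) = i.val
      omega
    · have := i.isLt
      intro h
      have h' : 2*n - 1 - i.val = i.val := congrArg Fin.val h
      omega
    · have hi := i.isLt; have hj := j.isLt
      rw [Fin.lt_def] at h1 h2 h3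
      have e2 : j.val < 2*n - 1 - i.val := h2
      have e3 : 2*n - 1 - i.val < 2*n - 1 - j.val := h3
      omega⟩

/-- The Temperley–Lieb operator `e_j` (with `j` the 1-indexed label of the paper,
acting on points `j`, `j+1`, cyclically identifying `2n+1` with `1`;
point `p` corresponds to index `p-1`). -/
def TLe (m : ℕ) (j : ℕ) (f : Fin m → Fin m) : Fin m → Fin m :=
  fun i =>
    let a : Fin m := ⟨(j - 1) % m, Nat.mod_lt _ i.pos⟩
    let b : Fin m := ⟨j % m, Nat.mod_lt _ i.pos⟩
    if i = a then b else if i = b then a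
    else if f i = a then f b else if f i = b then f a else f i

/-- Concatenation `σπ` of two matchings (as functions on points). -/
def concatF (n n' : ℕ) (f : Fin (2*n) → Fin (2*n)) (g : Fin (2*n') → Fin (2*n')) :
    Fin (2*(n+n')) → Fin (2*(n+n')) := fun i =>
  if h : i.val < 2*n then
    ⟨(f ⟨i.val, h⟩).val, by have := (f ⟨i.val, h⟩).isLt; omega⟩
  else
    ⟨2*n + (g ⟨i.val - 2*n, by have := i.isLt; omega⟩).val,
      by have := (g ⟨i.val - 2*n, by have := i.isLt; omega⟩).isLt; omega⟩

/-- `(π)_m`: the matching `π` (of size `n`) surrounded by `m` nested arches. -/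
def nestF (n m : ℕ) (f : Fin (2*n) → Fin (2*n)) :
    Fin (2*(n+m)) → Fin (2*(n+m)) := fun i =>
  if h : i.val < m ∨ 2*n + m ≤ i.val then
    ⟨2*(n+m) - 1 - i.val, by have := i.isLt; omega⟩
  else
    ⟨m + (f ⟨i.val - m, by have := i.isLt; omega⟩).val,
      by have := (f ⟨i.val - m, by have := i.isLt; omega⟩).isLt; omega⟩

/-- Rotation `ρ` : `i` and `j` are matched in `ρ(π)` iff `i-1` and `j-1` are matched in `π`. -/
def rotF (m : ℕ) (f : Fin m → Fin m) : Fin m → Fin m := fun i =>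
  ⟨((f ⟨(i.val + (m - 1)) % m, Nat.mod_lt _ i.pos⟩).val + 1) % m, Nat.mod_lt _ i.pos⟩

/-- The length of the `i`-th row (0-indexed, from the top) of the Young diagram `λ(π)`:
if `v_0 < … < v_{n-1}` are the (0-indexed) positions of the left endpoints of the arches,
then the `i`-th row from the top has `v_{n-1-i} - (n-1-i)` boxes. -/
noncomputable def lamRowF (n : ℕ) (f : Fin (2*n) → Fin (2*n)) (i : ℕ) : ℕ :=
  if i < n then
    (((Finset.univ.filter fun j : Fin (2*n) => j < f j).sort (· ≤ ·)).map Fin.val).getD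
        (n - 1 - i) 0 - (n - 1 - i)
  else 0

/-- `|λ(π)|`, the number of boxes of the Young diagram of `π`. -/
noncomputable def numBoxes (n : ℕ) (f : Fin (2*n) → Fin (2*n)) : ℕ :=
  ∑ i ∈ Finset.range n, lamRowF n f i

/-- `σ ≤ π`, i.e. `λ(σ)` is contained in `λ(π)`. -/
noncomputable def LamLe (n : ℕ) (f g : Fin (2*n) → Fin (2*n)) : Prop :=
  ∀ i, lamRowF n f i ≤ lamRowF n g i

/-- `σ < π`, i.e. `λ(σ)` is strictly contained in `λ(π)`. -/
noncomputable def LamLt (n : ℕ) (f g : Fin (2*n) → Fin (2*n)) : Prop :=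
  LamLe n f g ∧ ∃ i, lamRowF n f i < lamRowF n g i

/-- `σ ↗_j π` : `λ(π)` is obtained from `λ(σ)` by adding one box on the `j`-th diagonal
(the box in 0-indexed row `r` and 0-indexed column `c` lies on diagonal `n + c - r`,
matching the paper's 1-indexed `n + c - i`). -/
noncomputable def UpArrow (n : ℕ) (f g : Fin (2*n) → Fin (2*n)) (j : ℕ) : Prop :=
  ∃ r, r < n ∧ lamRowF n g r = lamRowF n f r + 1 ∧
    (∀ i, i ≠ r → lamRowF n g i = lamRowF n f i) ∧
    n + lamRowF n f r - r = j

/-- The number of boxes of `λ(π)` lying on the `d`-th diagonal. -/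
noncomputable def boxesOnDiag (n : ℕ) (f : Fin (2*n) → Fin (2*n)) (d : ℕ) : ℕ :=
  ((Finset.range n ×ˢ Finset.range n).filter
    (fun rc => rc.2 < lamRowF n f rc.1 ∧ n + rc.2 - rc.1 = d)).card

/-- The cells `(row, column)` (0-indexed) of the Young diagram `λ(π)`. -/
noncomputable def cellsF (n : ℕ) (f : Fin (2*n) → Fin (2*n)) : Finset (ℕ × ℕ) :=
  (Finset.range n ×ˢ Finset.range n).filter fun rc => rc.2 < lamRowF n f rc.1

/-- `f_{λ(π)}`: the number of standard Young tableaux of shape `λ(π)`, i.e. of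
bijective fillings of the cells with `0, …, |λ|-1` strictly increasing along
rows and down columns. -/
noncomputable def numSYT (n : ℕ) (f : Fin (2*n) → Fin (2*n)) : ℕ :=
  Nat.card {T : {c : ℕ × ℕ // c ∈ cellsF n f} ≃ Fin (cellsF n f).card //
    (∀ a b : {c : ℕ × ℕ // c ∈ cellsF n f}, a.1.1 = b.1.1 → a.1.2 < b.1.2 → T a < T b) ∧
    (∀ a b : {c : ℕ × ℕ // c ∈ cellsF n f}, a.1.2 = b.1.2 → a.1.1 < b.1.1 → T a < T b)}

/-! ### Fully packed loops -/

/-- The vertices relevant for an FPL of size `n`: the `n × n` grid vertices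
(`(column, row)`, 0-indexed, row 0 at the top) together with the `4n` external
edge endpoints, indexed counterclockwise starting with the topmost on the left side. -/
def FVert (n : ℕ) := (Fin n × Fin n) ⊕ (Fin (4*n))

/-- The grid vertex to which the `t`-th external edge is attached
(`t` counted counterclockwise: down the left side, then along the bottom,
up the right side, and along the top). -/
def extVert {n : ℕ} (t : Fin (4*n)) : Fin n × Fin n :=
  if h1 : t.val < n then (⟨0, by omega⟩, ⟨t.val, h1⟩)
  else if h2 : t.val < 2*n then (⟨t.val - n, by omega⟩, ⟨n - 1, by omega⟩)
  else if h3 : t.val < 3*n then (⟨n - 1, by omega⟩, ⟨n - 1 - (t.val - 2*n), by omega⟩)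
  else (⟨n - 1 - (t.val - 3*n), by have := t.isLt; omega⟩, ⟨0, by have := t.isLt; omega⟩)

/-- Adjacency in the `n × n` grid graph. -/
def gridAdj {n : ℕ} (u v : Fin n × Fin n) : Prop :=
  (u.1 = v.1 ∧ (u.2.val + 1 = v.2.val ∨ v.2.val + 1 = u.2.val)) ∨
  (u.2 = v.2 ∧ (u.1.val + 1 = v.1.val ∨ v.1.val + 1 = u.1.val))

/-- Adjacency in the `n × n` grid together with all `4n` external edges. -/
def fullAdj {n : ℕ} : FVert n → FVert n → Prop
  | Sum.inl u, Sum.inl v => gridAdj u v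
  | Sum.inl u, Sum.inr t => u = extVert t
  | Sum.inr t, Sum.inl u => u = extVert t
  | Sum.inr _, Sum.inr _ => False

/-- A fully packed loop configuration of size `n`: a subgraph of the grid with
external edges in which every grid vertex has degree `2` and which contains
exactly every other external edge, beginning with the topmost at the left side. -/
structure FPL (n : ℕ) where
  adj : FVert n → FVert n → Prop
  symm : ∀ u v, adj u v → adj v u
  sub : ∀ u v, adj u v → fullAdj u v
  degGrid : ∀ u : Fin n × Fin n, {v | adj (Sum.inl u) v}.ncard = 2
  degExtEven : ∀ t : Fin (4*n), t.val % 2 = 0 → {v | adj (Sum.inr t) v}.ncard = 1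
  degExtOdd : ∀ t : Fin (4*n), t.val % 2 = 1 → {v | adj (Sum.inr t) v}.ncard = 0

/-- `F` has link pattern `f` : the chosen external edges, numbered counterclockwise by
`Fin (2n)` (the `k`-th chosen one being the external edge at boundary position `2k`),
are matched in pairs by `f` according to connectivity in `F`. -/
def hasLinkPattern {n : ℕ} (F : FPL n) (f : Fin (2*n) → Fin (2*n)) : Prop :=
  ∀ k l : Fin (2*n), f k = l ↔ (k ≠ l ∧
    Relation.ReflTransGen F.adj
      (Sum.inr ⟨2*k.val, by have := k.isLt; omega⟩)
      (Sum.inr ⟨2*l.val, by have := l.isLt; omega⟩))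

/-- `A_π`: the number of FPLs of size `n` with link pattern `π`. -/
noncomputable def countFPL (n : ℕ) (f : Fin (2*n) → Fin (2*n)) : ℕ :=
  Nat.card {F : FPL n // hasLinkPattern F f}

/-! ### Wheel polynomials and the operators `S_k`, `D_k` -/

/-- The cyclic successor `k+1` on `Fin m`. -/
def cycS {m : ℕ} (i : Fin m) : Fin m := ⟨(i.val + 1) % m, Nat.mod_lt _ i.pos⟩

/-- `S_k`: the algebra automorphism exchanging the variables `z_k` and `z_{k+1}`
(cyclically, `z_{2n+1} := z_1`). -/
noncomputable def swapVar {F : Type*} [CommSemiring F] {N : ℕ} (k : Fin N)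
    (f : MvPolynomial (Fin N) F) : MvPolynomial (Fin N) F :=
  MvPolynomial.rename (Equiv.swap k (cycS k)) f

/-- `D` is the operator `D_k : f ↦ ((q z_k - q⁻¹ z_{k+1})/(z_{k+1} - z_k))·(S_k f - f)`,
characterized by `(z_{k+1} - z_k) · D f = (q z_k - q⁻¹ z_{k+1}) · (S_k f - f)`. -/
def IsDOp {F : Type*} [Field F] {N : ℕ} (q : F) (k : Fin N)
    (D : MvPolynomial (Fin N) F → MvPolynomial (Fin N) F) : Prop :=
  ∀ f, (X (cycS k) - X k) * D f = (C q * X k - C q⁻¹ * X (cycS k)) * (swapVar k f - f)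

/-- A wheel polynomial of order `n`: homogeneous of degree `n(n-1)` and vanishing
under every substitution `z_j := q² z_i`, `z_k := q⁴ z_i` with `i < j < k`. -/
def IsWheel {F : Type*} [Field F] (q : F) (n : ℕ) (p : MvPolynomial (Fin (2*n)) F) : Prop :=
  p.IsHomogeneous (n*(n-1)) ∧
  ∀ i j k : Fin (2*n), i < j → j < k →
    (MvPolynomial.aeval (fun t : Fin (2*n) =>
      if t = j then C (q^2) * X i else if t = k then C (q^4) * X i else X t)) p = 0

/-- The vector space `W_n[z]` of wheel polynomials of order `n`, as a submodule. -/
noncomputable def wheelSpace (F : Type*) [Field F] (q : F) (n : ℕ) :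
    Submodule F (MvPolynomial (Fin (2*n)) F) :=
  (homogeneousSubmodule (Fin (2*n)) F (n*(n-1))) ⊓
  ⨅ (i : Fin (2*n)) (j : Fin (2*n)) (k : Fin (2*n)) (_ : i < j) (_ : j < k),
    LinearMap.ker (MvPolynomial.aeval (R := F) (fun t : Fin (2*n) =>
      if t = j then C (q^2) * X i else if t = k then C (q^4) * X i else X t)).toLinearMap

/-- `Ψ_{()_n} = (q - q⁻¹)^{-n(n-1)} ∏_{1 ≤ i < j ≤ n} (q z_i - q⁻¹ z_j)(q z_{n+i} - q⁻¹ z_{n+j})`. -/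
noncomputable def PsiEmpty {F : Type*} [Field F] (q : F) (n : ℕ) :
    MvPolynomial (Fin (2*n)) F :=
  C (((q - q⁻¹)^(n*(n-1)))⁻¹) *
    ∏ ij ∈ Finset.univ.filter (fun ij : Fin n × Fin n => ij.1 < ij.2),
      ((C q * X ⟨ij.1.val, by have := ij.1.isLt; omega⟩ -
        C q⁻¹ * X ⟨ij.2.val, by have := ij.2.isLt; omega⟩) *
       (C q * X ⟨n + ij.1.val, by have := ij.1.isLt; omega⟩ -
        C q⁻¹ * X ⟨n + ij.2.val, by have := ij.2.isLt; omega⟩))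

/-- The `Fin (2n)`-index of the operator `D_j` for the paper's (1-indexed, cyclic,
`D_{j+2n} = D_j`) index `j`. -/
def finOfIdx (N : ℕ) (hN : 0 < N) (j : ℕ) : Fin N := ⟨(j - 1) % N, Nat.mod_lt _ hN⟩

/-- The list of `D`-operator indices for `D_π`: for each box of `λ(π)`, read row by row
from top to bottom and left to right within each row, the (0-indexed) index of the
diagonal `n + c - i` of that box. -/
def diagList1 (n : ℕ) (lam : ℕ → ℕ) : List (Fin (2*n)) :=
  (List.finRange n).flatMap fun i =>
    (List.range (lam i.val)).map fun c =>
      ⟨(n - 1 + c - i.val) % (2*n), Nat.mod_lt _ (by have := i.isLt; omega)⟩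

/-- The wheel polynomial `D_π`, obtained from `Ψ_{()_n}` by successively applying,
for each box of `λ(π)` read row by row from top to bottom and left to right,
the operator `D` indexed by the diagonal of that box. -/
noncomputable def DpiF {F : Type*} [Field F] (q : F) (n : ℕ)
    (D : Fin (2*n) → MvPolynomial (Fin (2*n)) F → MvPolynomial (Fin (2*n)) F)
    (f : Fin (2*n) → Fin (2*n)) : MvPolynomial (Fin (2*n)) F :=
  (diagList1 n (lamRowF n f)).foldl (fun p k => D k p) (PsiEmpty q n)

/-- Operator indices for the second stage of `D_{π₁,π₂}`: for each box of `λ(π₂)`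
(in reading order) the index of `D_{c-i}` (paper 1-indexed diagonal `c - i`, taken
mod `2n`). -/
def diagList2 (n rows : ℕ) (h : rows ≤ n) (lam : ℕ → ℕ) : List (Fin (2*n)) :=
  (List.finRange rows).flatMap fun i =>
    (List.range (lam i.val)).map fun c =>
      ⟨(((c : ℤ) - (i.val : ℤ) - 1) % ((2*n : ℕ) : ℤ)).toNat, by
        have hi := i.isLt
        have h2 : (0:ℤ) < ((2*n : ℕ) : ℤ) := by exact_mod_cast (show (0:ℕ) < 2*n by omega)
        have h3 := Int.emod_nonneg ((c : ℤ) - (i.val : ℤ) - 1) (ne_of_gt h2)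
        have h4 := Int.emod_lt_of_pos ((c : ℤ) - (i.val : ℤ) - 1) h2
        omega⟩

/-- The wheel polynomial `D_{π₁,π₂}` (with `π₁` of size `n₁`, `π₂` of size `n₂`):
starting from `D_{(π₁)_{n₂}}`, apply for each box of `λ(π₂)`, read row by row from top
to bottom and left to right, the operator `D` indexed (cyclically) by `c - i`. -/
noncomputable def DpiPair {F : Type*} [Field F] (q : F) (n1 n2 : ℕ)
    (D : Fin (2*(n1+n2)) → MvPolynomial (Fin (2*(n1+n2))) F → MvPolynomial (Fin (2*(n1+n2))) F)
    (f1 : Fin (2*n1) → Fin (2*n1)) (f2 : Fin (2*n2) → Fin (2*n2)) :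
    MvPolynomial (Fin (2*(n1+n2))) F :=
  (diagList2 (n1+n2) n2 (by omega) (lamRowF n2 f2)).foldl (fun p k => D k p)
    (DpiF q (n1+n2) D (nestF n1 n2 f1))

/-- `Psi` is the family `(Ψ_π)_{π ∈ NC_n}`: it starts with `Ψ_{()_n}` and satisfies the
recursion `Ψ_π = D_j(Ψ_σ) - Σ_{τ ∈ e_j⁻¹(σ), τ ∉ {σ,π}} Ψ_τ` whenever `σ ↗_j π`. -/
noncomputable def IsPsiFamily {F : Type*} [Field F] (q : F) (n : ℕ)
    (D : Fin (2*n) → MvPolynomial (Fin (2*n)) F → MvPolynomial (Fin (2*n)) F)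
    (Psi : NCM n → MvPolynomial (Fin (2*n)) F) : Prop :=
  Psi (nestedNC n) = PsiEmpty q n ∧
  ∀ (hn : 0 < n) (j : ℕ) (σ π : NCM n), UpArrow n σ.1 π.1 j →
    Psi π = D (finOfIdx (2*n) (by omega) j) (Psi σ) -
      ∑ τ : NCM n, if TLe (2*n) j τ.1 = σ.1 ∧ τ ≠ σ ∧ τ ≠ π then Psi τ else 0

/-! ### The polynomials `f(i,j)`, `g(i)`, `h(i)` and `P(α|β|γ)` -/

noncomputable def fP {F : Type*} [Field F] (q : F) {N : ℕ} (i j : Fin N) :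
    MvPolynomial (Fin N) F :=
  C (q - q⁻¹)⁻¹ * (C q * X i - C q⁻¹ * X j)

noncomputable def gP {F : Type*} [Field F] (q : F) {N : ℕ} (i : Fin N) :
    MvPolynomial (Fin N) F :=
  C (q - q⁻¹)⁻¹ * (C q - C q⁻¹ * X i)

noncomputable def hP {F : Type*} [Field F] (q : F) {N : ℕ} (i : Fin N) :
    MvPolynomial (Fin N) F :=
  C (q - q⁻¹)⁻¹ * (C q * X i - C q⁻¹)

noncomputable def Pabg {F : Type*} [Field F] (q : F) (n : ℕ)
    (α : Fin (2*n) → Fin (2*n) → ℕ) (β γ : Fin (2*n) → ℕ) :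
    MvPolynomial (Fin (2*n)) F :=
  (∏ i : Fin (2*n), ∏ j : Fin (2*n), if i ≠ j then fP q i j ^ α i j else 1) *
  ∏ i : Fin (2*n), (gP q i ^ β i * hP q i ^ γ i)

/-- The indeterminate `q` of `ℚ(q)`. -/
noncomputable def qQ : RatFunc ℚ := RatFunc.X

/-- `q = e^{2πi/3} ∈ ℂ`. -/
noncomputable def qC : ℂ := Complex.exp (2 * (Real.pi : ℂ) * Complex.I / 3)

/-!
After the substitution `z ↦ z + 1`, every factor of `P(α|β|γ)` becomes `1 + ℓ` with `ℓ` a linear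
form, so the coefficient of a monomial of degree `d` in `∏ (1 + ℓ_v) ^ e_v` is a sum of products of
binomial coefficients `(e_v choose d_v)` with `∑ d_v = d`: a polynomial of degree `≤ d` in the
exponents. On the other hand `S_k` fixes the point `(1, …, 1)` and `z_{k+1} - z_k` is a nonzero
linear form, so `D_k` lowers the order of vanishing at `(1, …, 1)` by at most one. Hence
`f ↦ (D_{i_1} ⋯ D_{i_m} f)(1, …, 1)` is a linear functional that only sees the Taylor coefficients
of `f` at `(1, …, 1)` of degree `≤ m`.
-/

section PolynomialInExponents

variable {R : Type*} [CommSemiring R] {T : Type*}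

def IsPolyOfDegreeLE (d : ℕ) (c : (T → ℕ) → R) : Prop :=
  ∃ Q : MvPolynomial T R, Q.totalDegree ≤ d ∧ ∀ e, c e = eval (fun t => (e t : R)) Q

theorem IsPolyOfDegreeLE.mono {d d' : ℕ} (h : d ≤ d') {c : (T → ℕ) → R}
    (hc : IsPolyOfDegreeLE d c) : IsPolyOfDegreeLE d' c :=
  let ⟨Q, hQ, hQc⟩ := hc
  ⟨Q, hQ.trans h, hQc⟩

theorem isPolyOfDegreeLE_const (x : R) : IsPolyOfDegreeLE (T := T) 0 fun _ => x :=
  ⟨C x, (totalDegree_C x).le, fun _ => (eval_C x).symm⟩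

theorem IsPolyOfDegreeLE.add {d : ℕ} {c c' : (T → ℕ) → R} (hc : IsPolyOfDegreeLE d c)
    (hc' : IsPolyOfDegreeLE d c') : IsPolyOfDegreeLE d fun e => c e + c' e :=
  let ⟨Q, hQ, hQc⟩ := hc
  let ⟨Q', hQ', hQc'⟩ := hc'
  ⟨Q + Q', (totalDegree_add Q Q').trans (max_le hQ hQ'), fun e => by rw [map_add, ← hQc, ← hQc']⟩

theorem IsPolyOfDegreeLE.mul {d d' : ℕ} {c c' : (T → ℕ) → R} (hc : IsPolyOfDegreeLE d c)
    (hc' : IsPolyOfDegreeLE d' c') : IsPolyOfDegreeLE (d + d') fun e => c e * c' e :=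
  let ⟨Q, hQ, hQc⟩ := hc
  let ⟨Q', hQ', hQc'⟩ := hc'
  ⟨Q * Q', (totalDegree_mul Q Q').trans (add_le_add hQ hQ'), fun e => by
    rw [map_mul, ← hQc, ← hQc']⟩

theorem isPolyOfDegreeLE_sum {ι : Type*} (s : Finset ι) {d : ℕ} {c : ι → (T → ℕ) → R}
    (hc : ∀ i ∈ s, IsPolyOfDegreeLE d (c i)) : IsPolyOfDegreeLE d fun e => ∑ i ∈ s, c i e := by
  induction s using Finset.induction_on with
  | empty => simpa using (isPolyOfDegreeLE_const (T := T) (0 : R)).mono (Nat.zero_le d)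
  | insert i s hi ih =>
    simp only [Finset.sum_insert hi]
    exact (hc i (Finset.mem_insert_self i s)).add
      (ih fun j hj => hc j (Finset.mem_insert_of_mem hj))

theorem isPolyOfDegreeLE_choose {K : Type*} [Field K] [CharZero K] (t : T) (k : ℕ) :
    IsPolyOfDegreeLE k fun e => ((e t).choose k : K) := by
  refine ⟨C (k.factorial : K)⁻¹ * ∏ j ∈ Finset.range k, (X t - C (j : K)), ?_, fun e => ?_⟩
  · refine (totalDegree_mul _ _).trans ?_
    rw [totalDegree_C, zero_add]
    refine (totalDegree_finsetProd _ _).trans ?_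
    refine (Finset.sum_le_sum fun j _ => (totalDegree_sub_C_le (X t) ((j : ℕ) : K)).trans
      (totalDegree_X (R := K) t).le).trans ?_
    simp
  · -- `(a choose k) = a (a - 1) ⋯ (a - k + 1) / k!`
    simp [Nat.cast_choose_eq_descPochhammer_div, descPochhammer_eval_eq_prod_range, div_eq_inv_mul]

end PolynomialInExponents

section CoeffProdOneAddPow

variable {σ T : Type*}

theorem coeff_one_add_pow {R : Type*} [CommSemiring R] {ℓ : MvPolynomial σ R}
    (hℓ : ℓ.IsHomogeneous 1) (e : ℕ) (ρ : σ →₀ ℕ) :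
    coeff ρ ((1 + ℓ) ^ e) = (e.choose ρ.degree : R) * coeff ρ (ℓ ^ ρ.degree) := by
  have hpow : ∀ k ≠ ρ.degree, coeff ρ (ℓ ^ k) = 0 := fun k hk =>
    (one_mul k ▸ hℓ.pow k).coeff_eq_zero (Ne.symm hk)
  rw [add_comm, add_pow, coeff_sum]
  simp only [one_pow, mul_one, ← C_eq_coe_nat]
  simp only [mul_comm _ (C _), coeff_C_mul]
  rcases le_or_gt ρ.degree e with hle | hlt
  · exact Finset.sum_eq_single_of_mem ρ.degree (Finset.mem_range.mpr (by omega))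
      fun k _ hk => by rw [hpow k hk, mul_zero]
  · rw [Nat.choose_eq_zero_of_lt hlt, Nat.cast_zero, zero_mul]
    refine Finset.sum_eq_zero fun k hk => ?_
    rw [hpow k (by grind), mul_zero]

theorem isPolyOfDegreeLE_coeff_prod_one_add_pow {K : Type*} [Field K] [CharZero K]
    (ℓ : T → MvPolynomial σ K) (hℓ : ∀ t, (ℓ t).IsHomogeneous 1) (s : Finset T) (μ : σ →₀ ℕ) :
    IsPolyOfDegreeLE μ.degree fun e => coeff μ (∏ t ∈ s, (1 + ℓ t) ^ e t) := by
  induction s using Finset.induction_on generalizing μ with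
  | empty =>
    simpa using (isPolyOfDegreeLE_const (T := T) (coeff μ (1 : MvPolynomial σ K))).mono
      (Nat.zero_le _)
  | insert t s ht ih =>
    simp only [Finset.prod_insert ht, coeff_mul, coeff_one_add_pow (hℓ t)]
    refine isPolyOfDegreeLE_sum _ fun x hx => ?_
    have hdeg : x.1.degree + x.2.degree = μ.degree := by
      rw [← Finset.HasAntidiagonal.mem_antidiagonal.mp hx, map_add]
    exact (((isPolyOfDegreeLE_choose t _).mul (isPolyOfDegreeLE_const _)).mul (ih x.2)).mono
      (by omega)

end CoeffProdOneAddPow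

section IdealOfVars

variable {R : Type*} [CommSemiring R] {σ : Type*}

theorem mem_pow_idealOfVars_iff_homogeneousComponent {r : ℕ} {p : MvPolynomial σ R} :
    p ∈ idealOfVars σ R ^ r ↔ ∀ d < r, homogeneousComponent d p = 0 := by
  rw [mem_pow_idealOfVars_iff']
  refine ⟨fun h d hd => ?_, fun h x hx => ?_⟩
  · ext x
    rw [coeff_homogeneousComponent, coeff_zero]
    split_ifs with hx
    exacts [h x (hx ▸ hd), rfl]
  · simpa [coeff_homogeneousComponent] using congr_arg (coeff x) (h _ hx)

theorem rename_mem_pow_idealOfVars {τ : Type*} (e : σ → τ) {r : ℕ} {p : MvPolynomial σ R}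
    (hp : p ∈ idealOfVars σ R ^ r) : rename e p ∈ idealOfVars τ R ^ r := by
  have hI : (idealOfVars σ R).map (rename e) ≤ idealOfVars τ R := by
    rw [Ideal.map_span, Ideal.span_le]
    rintro _ ⟨_, ⟨i, rfl⟩, rfl⟩
    exact Ideal.subset_span ⟨e i, (rename_X (R := R) e i).symm⟩
  have := Ideal.mem_map_of_mem (rename (R := R) e) hp
  rw [Ideal.map_pow] at this
  exact Ideal.pow_right_mono hI r this

attribute [local instance] MvPolynomial.gradedAlgebra in
theorem homogeneousComponent_add_mul {u : MvPolynomial σ R} {i : ℕ} (hu : u.IsHomogeneous i)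
    (g : MvPolynomial σ R) (d : ℕ) :
    homogeneousComponent (i + d) (u * g) = u * homogeneousComponent d g := by
  have := DirectSum.coe_decompose_mul_of_left_mem_of_le (homogeneousSubmodule σ R)
    (b := g) (n := i + d) ((mem_homogeneousSubmodule i u).mpr hu) (Nat.le_add_right i d)
  rw [Nat.add_sub_cancel_left] at this
  rw [← decomposition.decompose'_apply, ← decomposition.decompose'_apply]
  exact this

theorem mem_pow_idealOfVars_of_mul_mem [NoZeroDivisors R] {u g : MvPolynomial σ R}
    (hu : u.IsHomogeneous 1) (hu0 : u ≠ 0) {r : ℕ} (h : u * g ∈ idealOfVars σ R ^ (r + 1)) :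
    g ∈ idealOfVars σ R ^ r := by
  rw [mem_pow_idealOfVars_iff_homogeneousComponent] at h ⊢
  intro d hd
  have := h (1 + d) (by omega)
  rw [homogeneousComponent_add_mul hu] at this
  exact (mul_eq_zero.mp this).resolve_left hu0

theorem apply_eq_sum_coeff_smul_of_pow_idealOfVars [Finite σ] {M : Type*} [AddCommMonoid M]
    [Module R M] (Φ : MvPolynomial σ R →ₗ[R] M) {m : ℕ}
    (hΦ : ∀ p ∈ idealOfVars σ R ^ (m + 1), Φ p = 0) (p : MvPolynomial σ R) :
    Φ p = ∑ μ ∈ (Finsupp.finite_of_degree_le m).toFinset, coeff μ p • Φ (monomial μ 1) := by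
  set S := (Finsupp.finite_of_degree_le (σ := σ) m).toFinset
  have hvanish : ∀ μ, coeff μ p • Φ (monomial μ 1) ≠ 0 → μ ∈ p.support ∧ μ ∈ S := by
    intro μ hμ
    refine ⟨mem_support_iff.mpr fun h => hμ (by rw [h, zero_smul]), ?_⟩
    by_contra hμS
    simp only [S, Set.Finite.mem_toFinset, Set.mem_ofPred_eq, not_le] at hμS
    have hmem : monomial μ (1 : R) ∈ idealOfVars σ R ^ (m + 1) :=
      (mem_pow_idealOfVars_iff' _ _).mpr fun x hx => by
        rw [coeff_monomial, if_neg (by rintro rfl; omega)]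
    exact hμ (by rw [hΦ _ hmem, smul_zero])
  have hmonomial : ∀ μ, Φ (monomial μ (coeff μ p)) = coeff μ p • Φ (monomial μ 1) := fun μ => by
    rw [← map_smul, smul_monomial, smul_eq_mul, mul_one]
  conv_lhs => rw [p.as_sum, map_sum]
  simp only [hmonomial]
  rw [← Finset.sum_filter_of_ne fun μ _ h => (hvanish μ h).2,
    ← Finset.sum_filter_of_ne (s := S) fun μ _ h => (hvanish μ h).1,
    Finset.filter_mem_eq_inter, Finset.filter_mem_eq_inter, Finset.inter_comm]

end IdealOfVars

theorem isPolyOfDegreeLE_apply_prod_one_add_pow {K : Type*} [Field K] [CharZero K]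
    {σ T : Type*} [Finite σ] (Φ : MvPolynomial σ K →ₗ[K] K) {m : ℕ}
    (hΦ : ∀ p ∈ idealOfVars σ K ^ (m + 1), Φ p = 0) (ℓ : T → MvPolynomial σ K)
    (hℓ : ∀ t, (ℓ t).IsHomogeneous 1) (s : Finset T) :
    IsPolyOfDegreeLE m fun e => Φ (∏ t ∈ s, (1 + ℓ t) ^ e t) := by
  rw [_root_.funext fun e : T → ℕ =>
    apply_eq_sum_coeff_smul_of_pow_idealOfVars Φ hΦ (∏ t ∈ s, (1 + ℓ t) ^ e t)]
  refine isPolyOfDegreeLE_sum _ fun μ hμ => ?_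
  simp only [Set.Finite.mem_toFinset, Set.mem_ofPred_eq] at hμ
  exact ((isPolyOfDegreeLE_coeff_prod_one_add_pow ℓ hℓ s μ).mul
    (isPolyOfDegreeLE_const _)).mono hμ

section ShiftOne

variable {R : Type*} [CommRing R] {σ : Type*}

noncomputable def shiftOne : MvPolynomial σ R ≃ₐ[R] MvPolynomial σ R :=
  AlgEquiv.ofAlgHom (aeval fun i => X i + 1) (aeval fun i => X i - 1)
    (by ext; simp) (by ext; simp)

theorem shiftOne_X (i : σ) : shiftOne (X i : MvPolynomial σ R) = X i + 1 := aeval_X _ i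

theorem shiftOne_C (c : R) : shiftOne (C c : MvPolynomial σ R) = C c := by
  simpa [algebraMap_eq] using (shiftOne : MvPolynomial σ R ≃ₐ[R] _).commutes c

theorem shiftOne_rename (e : σ → σ) (p : MvPolynomial σ R) :
    shiftOne (rename e p) = rename e (shiftOne p) := by
  have : (shiftOne : MvPolynomial σ R ≃ₐ[R] _).toAlgHom.comp (rename e) =
      (rename e).comp shiftOne.toAlgHom := by
    ext i
    simp [shiftOne_X]
  exact AlgHom.congr_fun this p

theorem eval_one_eq_constantCoeff_shiftOne (p : MvPolynomial σ R) :
    eval (fun _ => 1) p = constantCoeff (shiftOne p) := by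
  have : eval (fun _ : σ => (1 : R)) =
      (constantCoeff : MvPolynomial σ R →+* R).comp (shiftOne : _ ≃ₐ[R] _).toRingHom := by
    ext <;> simp [shiftOne_C, shiftOne_X]
  exact RingHom.congr_fun this p

end ShiftOne

theorem cycS_ne {N : ℕ} (hN : N ≠ 1) (k : Fin N) : cycS k ≠ k := by
  intro h
  have hk := k.isLt
  have hv : (k.val + 1) % N = k.val := congr_arg Fin.val h
  rcases Nat.lt_or_ge (k.val + 1) N with hlt | hge
  · rw [Nat.mod_eq_of_lt hlt] at hv
    omega
  · rw [show k.val + 1 = N by omega, Nat.mod_self] at hv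
    omega

theorem X_cycS_sub_X_ne_zero {R : Type*} [CommRing R] [Nontrivial R] {N : ℕ} {k : Fin N}
    (hk : cycS k ≠ k) : (X (cycS k) - X k : MvPolynomial (Fin N) R) ≠ 0 :=
  sub_ne_zero.mpr fun h => hk (X_injective (R := R) h)

namespace IsDOp

variable {K : Type*} [Field K] {N : ℕ} {q : K} {k : Fin N}
  {D : MvPolynomial (Fin N) K → MvPolynomial (Fin N) K}

theorem map_add (hD : IsDOp q k D) (hk : cycS k ≠ k) (f g : MvPolynomial (Fin N) K) :
    D (f + g) = D f + D g := by
  refine mul_left_cancel₀ (X_cycS_sub_X_ne_zero hk) ?_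
  rw [mul_add, hD, hD, hD]
  simp only [swapVar, _root_.map_add]
  ring

theorem map_smul (hD : IsDOp q k D) (hk : cycS k ≠ k) (c : K) (f : MvPolynomial (Fin N) K) :
    D (c • f) = c • D f := by
  refine mul_left_cancel₀ (X_cycS_sub_X_ne_zero hk) ?_
  rw [smul_eq_C_mul, smul_eq_C_mul, mul_left_comm, hD, hD]
  simp only [swapVar, map_mul, rename_C]
  ring

noncomputable def toLinearMap (hD : IsDOp q k D) (hk : cycS k ≠ k) :
    MvPolynomial (Fin N) K →ₗ[K] MvPolynomial (Fin N) K where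
  toFun := D
  map_add' := hD.map_add hk
  map_smul' := hD.map_smul hk

theorem shiftOne_mem_pow (hD : IsDOp q k D) (hk : cycS k ≠ k) {r : ℕ}
    {f : MvPolynomial (Fin N) K} (hf : shiftOne f ∈ idealOfVars (Fin N) K ^ (r + 1)) :
    shiftOne (D f) ∈ idealOfVars (Fin N) K ^ r := by
  have h := congr_arg shiftOne (hD f)
  simp only [swapVar, map_mul, map_sub, shiftOne_rename, shiftOne_X, add_sub_add_right_eq_sub] at h
  refine mem_pow_idealOfVars_of_mul_mem ((isHomogeneous_X _ _).sub (isHomogeneous_X _ _))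
    (X_cycS_sub_X_ne_zero hk) ?_
  rw [h]
  exact Ideal.mul_mem_left _ _ (Ideal.sub_mem _ (rename_mem_pow_idealOfVars _ hf) hf)

end IsDOp

section IteratedDOp

variable {K : Type*} [Field K] {N : ℕ} {q : K}
  {D : Fin N → MvPolynomial (Fin N) K → MvPolynomial (Fin N) K}

theorem shiftOne_foldr_mem_pow (hD : ∀ k, IsDOp q k (D k)) (hN : N ≠ 1) (L : List (Fin N))
    {r : ℕ} {f : MvPolynomial (Fin N) K}
    (hf : shiftOne f ∈ idealOfVars (Fin N) K ^ (L.length + r)) :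
    shiftOne (L.foldr (fun k acc => D k acc) f) ∈ idealOfVars (Fin N) K ^ r := by
  induction L generalizing r with
  | nil => simpa using hf
  | cons k L ih =>
    rw [List.length_cons, add_right_comm] at hf
    exact (hD k).shiftOne_mem_pow (cycS_ne hN k) (ih hf)

theorem exists_linearMap_eval_one_foldr (hD : ∀ k, IsDOp q k (D k)) (hN : N ≠ 1)
    (L : List (Fin N)) :
    ∃ Φ : MvPolynomial (Fin N) K →ₗ[K] K,
      (∀ f, Φ (shiftOne f) = eval (fun _ => 1) (L.foldr (fun k acc => D k acc) f)) ∧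
      ∀ p ∈ idealOfVars (Fin N) K ^ (L.length + 1), Φ p = 0 := by
  let Ψ : Module.End K (MvPolynomial (Fin N) K) :=
    (L.map fun k => (hD k).toLinearMap (cycS_ne hN k)).prod
  have hΨ : ∀ f, Ψ f = L.foldr (fun k acc => D k acc) f := by
    intro f
    induction L with
    | nil => rfl
    | cons k L ih => simp [Ψ, ← ih, Module.End.mul_apply, IsDOp.toLinearMap]
  let Φ := (aeval fun _ => (1 : K)).toLinearMap ∘ₗ Ψ ∘ₗ shiftOne.symm.toLinearMap
  have hΦ : ∀ f, Φ (shiftOne f) = eval (fun _ => 1) (L.foldr (fun k acc => D k acc) f) := by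
    intro f
    simp [Φ, hΨ]
  refine ⟨Φ, hΦ, fun p hp => ?_⟩
  rw [← shiftOne.apply_symm_apply p] at hp ⊢
  rw [hΦ, eval_one_eq_constantCoeff_shiftOne, constantCoeff_eq]
  exact (mem_pow_idealOfVars_iff' 1 _).mp (shiftOne_foldr_mem_pow hD hN L hp) 0 (by simp)

end IteratedDOp

section Pabg

abbrev PabgIndex (n : ℕ) := (Fin (2*n) × Fin (2*n)) ⊕ (Fin (2*n) ⊕ Fin (2*n))

variable {K : Type*} [Field K] (q : K) (n : ℕ)

/-- The factors `f(i,j)`, `g(i)`, `h(i)` of `P(α|β|γ)` all equal `1` at `(1, …, 1)`;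
these are their linear parts there. -/
noncomputable def pabgLinearPart : PabgIndex n → MvPolynomial (Fin (2*n)) K
  | .inl ij => if ij.1 ≠ ij.2 then C (q - q⁻¹)⁻¹ * (C q * X ij.1 - C q⁻¹ * X ij.2) else 0
  | .inr (.inl i) => C (q - q⁻¹)⁻¹ * -(C q⁻¹ * X i)
  | .inr (.inr i) => C (q - q⁻¹)⁻¹ * (C q * X i)

theorem isHomogeneous_pabgLinearPart (v : PabgIndex n) :
    (pabgLinearPart q n v).IsHomogeneous 1 := by
  rcases v with ⟨i, j⟩ | i | i
  · simp only [pabgLinearPart]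
    split_ifs
    exacts [((isHomogeneous_C_mul_X _ i).sub (isHomogeneous_C_mul_X _ j)).C_mul _,
      isHomogeneous_zero _ _ _]
  · exact (isHomogeneous_C_mul_X _ i).neg.C_mul _
  · exact (isHomogeneous_C_mul_X _ i).C_mul _

variable {q n}

theorem shiftOne_Pabg (hq : q - q⁻¹ ≠ 0) (e : PabgIndex n → ℕ) :
    shiftOne (Pabg q n (fun i j => e (.inl (i, j))) (fun i => e (.inr (.inl i)))
      fun i => e (.inr (.inr i))) = ∏ v, (1 + pabgLinearPart q n v) ^ e v := by
  have h1 : (C (q - q⁻¹)⁻¹ * (C q - C q⁻¹) : MvPolynomial (Fin (2*n)) K) = 1 := by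
    rw [← C_sub, ← C_mul, inv_mul_cancel₀ hq, C_1]
  have hf : ∀ i j : Fin (2*n),
      shiftOne (fP q i j) = 1 + C (q - q⁻¹)⁻¹ * (C q * X i - C q⁻¹ * X j) := by
    intro i j
    simp only [fP, map_mul, map_sub, shiftOne_C, shiftOne_X]
    linear_combination h1
  have hg : ∀ i : Fin (2*n), shiftOne (gP q i) = 1 + C (q - q⁻¹)⁻¹ * -(C q⁻¹ * X i) := by
    intro i
    simp only [gP, map_mul, map_sub, shiftOne_C, shiftOne_X]
    linear_combination h1
  have hh : ∀ i : Fin (2*n), shiftOne (hP q i) = 1 + C (q - q⁻¹)⁻¹ * (C q * X i) := by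
    intro i
    simp only [hP, map_mul, map_sub, shiftOne_C, shiftOne_X]
    linear_combination h1
  simp only [Fintype.prod_sum_type, Fintype.prod_prod_type, Pabg, map_mul, map_prod, map_pow,
    hg, hh, pabgLinearPart]
  rw [Finset.prod_mul_distrib]
  congr 1
  refine Finset.prod_congr rfl fun i _ => Finset.prod_congr rfl fun j _ => ?_
  split_ifs with hij
  · rw [map_pow, hf]
  · simp

end Pabg

theorem isPolyOfDegreeLE_eval_one_foldr_Pabg {K : Type*} [Field K] [CharZero K] {q : K}
    (hq : q - q⁻¹ ≠ 0) (n : ℕ)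
    {D : Fin (2*n) → MvPolynomial (Fin (2*n)) K → MvPolynomial (Fin (2*n)) K}
    (hD : ∀ k, IsDOp q k (D k)) (L : List (Fin (2*n))) :
    IsPolyOfDegreeLE L.length fun e : PabgIndex n → ℕ =>
      eval (fun _ => 1) (L.foldr (fun k acc => D k acc)
        (Pabg q n (fun i j => e (.inl (i, j))) (fun i => e (.inr (.inl i)))
          fun i => e (.inr (.inr i)))) := by
  obtain ⟨Φ, hΦ, hΦ_vanish⟩ := exists_linearMap_eval_one_foldr hD (by omega) L
  simp only [← hΦ, shiftOne_Pabg hq]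
  exact isPolyOfDegreeLE_apply_prod_one_add_pow Φ hΦ_vanish _
    (isHomogeneous_pabgLinearPart q n) _

theorem qQ_sub_inv_ne_zero : qQ - qQ⁻¹ ≠ 0 := by
  intro h
  have := congr_arg RatFunc.intDegree (sub_eq_zero.mp h)
  rw [RatFunc.intDegree_inv, qQ, RatFunc.intDegree_X] at this
  omega

theorem stmt18 (n : ℕ) (m : ℕ) (idxs : Fin m → Fin (2*n))
    (D : Fin (2*n) → MvPolynomial (Fin (2*n)) (RatFunc ℚ) → MvPolynomial (Fin (2*n)) (RatFunc ℚ))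
    (hD : ∀ k, IsDOp qQ k (D k)) :
    ∃ Q : MvPolynomial ((Fin (2*n) × Fin (2*n)) ⊕ (Fin (2*n) ⊕ Fin (2*n))) (RatFunc ℚ),
      Q.totalDegree ≤ m ∧
      ∀ (α : Fin (2*n) → Fin (2*n) → ℕ) (β γ : Fin (2*n) → ℕ),
        MvPolynomial.eval (fun _ => (1 : RatFunc ℚ))
          ((List.ofFn idxs).foldr (fun k acc => D k acc) (Pabg qQ n α β γ)) =
        MvPolynomial.eval (fun v => match v with
          | Sum.inl ij => ((α ij.1 ij.2 : ℕ) : RatFunc ℚ)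
          | Sum.inr (Sum.inl i) => ((β i : ℕ) : RatFunc ℚ)
          | Sum.inr (Sum.inr i) => ((γ i : ℕ) : RatFunc ℚ)) Q := by
  obtain ⟨Q, hQ_deg, hQ⟩ :=
    isPolyOfDegreeLE_eval_one_foldr_Pabg qQ_sub_inv_ne_zero n hD (List.ofFn idxs)
  refine ⟨Q, by simpa using hQ_deg, fun α β γ => ?_⟩
  refine (hQ (Sum.elim (fun ij => α ij.1 ij.2) (Sum.elim β γ))).trans
    (congr_arg (fun x => eval x Q) (_root_.funext fun v => ?_))
  rcases v with ij | i | i <;> rfl
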